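/- Under unconfoundedness, SUTVA, and positivity, the distribution of X in the treated subpopulation and the full-population conditional law of Y(1) given X satisfy: the joint law of (X, Y) given A = 1 equals P_{X|A=1} × P_{Y(1)|X}. Consequently, predicting Y(0) for control units from treated-unit data is exactly a covariate-shift problem: training data ~ P_{X|A=1} × P_{Y(1)|X}, target data ~ P_{X|A=0} × P_{Y(1)|X}, with likelihood ratio of covariates proportional to (1-π(x))/π(x). -/

import Mathlib

open MeasureTheory ProbabilityTheory

lemma aux_condexp {Ω : Type*} [MeasurableSpace Ω] (μ : Measure Ω) [IsProbabilityMeasure μ]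
    {d : ℕ} (X : Ω → Fin d → ℝ) (hX : Measurable X)
    (f : (Fin d → ℝ) → ℝ) (hf : Measurable f) (hf0 : ∀ x, 0 ≤ f x) (hf1 : ∀ x, f x ≤ 1)
    (E : Set Ω) (hE : MeasurableSet E)
    (h : ∀ S : Set (Fin d → ℝ), MeasurableSet S →
      μ (E ∩ X ⁻¹' S) = ∫⁻ x in S, ENNReal.ofReal (f x) ∂(μ.map X)) :
    (fun ω => f (X ω)) =ᵐ[μ]
      μ[Set.indicator E (fun _ => (1 : ℝ)) | MeasurableSpace.comap X inferInstance] := by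
  have hm : MeasurableSpace.comap X inferInstance ≤ ‹MeasurableSpace Ω› := hX.comap_le
  haveI : SigmaFinite (μ.trim hm) := by infer_instance
  have hXm : Measurable[MeasurableSpace.comap X inferInstance] X := fun t ht => ⟨t, ht, rfl⟩
  refine ae_eq_condExp_of_forall_setIntegral_eq hm
    ((integrable_const (1:ℝ)).indicator hE) (fun s _ _ => ?_) (fun s hs _ => ?_) ?_
  · refine (Integrable.mono' (integrable_const (1:ℝ))
      ((hf.comp hX).aestronglyMeasurable) (ae_of_all _ fun ω => ?_)).integrableOn
    simp only [Function.comp_apply]; rw [Real.norm_eq_abs, abs_le]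
    exact ⟨by linarith [hf0 (X ω)], hf1 (X ω)⟩
  · obtain ⟨S, hS, rfl⟩ := hs
    have hL : ∫ x in X ⁻¹' S, f (X x) ∂μ = ∫ x in S, f x ∂(μ.map X) :=
      (setIntegral_map hS hf.aestronglyMeasurable hX.aemeasurable).symm
    have hL2 : ∫ x in S, f x ∂(μ.map X)
        = (∫⁻ x in S, ENNReal.ofReal (f x) ∂(μ.map X)).toReal := by
      rw [integral_eq_lintegral_of_nonneg_ae (ae_of_all _ hf0)
        hf.aestronglyMeasurable.restrict]
    have hR : ∫ x in X ⁻¹' S, E.indicator (fun _ => (1:ℝ)) x ∂μ = (μ (E ∩ X ⁻¹' S)).toReal := by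
      rw [setIntegral_indicator hE, setIntegral_const, measureReal_def, Set.inter_comm, smul_eq_mul, mul_one]
    rw [hL, hL2, hR, h S hS]
  · exact StronglyMeasurable.aestronglyMeasurable (hf.comp hXm).stronglyMeasurable

/-- Under unconfoundedness (conditional-expectation product form), SUTVA and
positivity, the joint law of `(X, Y)` given `A = 1` factorizes as
`P_{X|A=1} ⊗ P_{Y(1)|X}` where `κ1 = P_{Y(1)|X}` is the full-population conditional law of
`Y(1)` given `X` (i.e. `law(X,Y(1)) = law(X) ⊗ₘ κ1`); consequently predicting for control
units from treated data is a covariate-shift problem, with covariate likelihood ratio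
`dP_{X|A=0}/dP_{X|A=1}(x) = (P(A=1)/P(A=0))·(1-π(x))/π(x) ∝ (1-π(x))/π(x)`. -/
theorem stmt_16 {Ω : Type*} [MeasurableSpace Ω] (μ : Measure Ω) [IsProbabilityMeasure μ]
    {d : ℕ} (X : Ω → Fin d → ℝ) (A : Ω → Bool) (Y1 Y0 Y : Ω → ℝ)
    (hX : Measurable X) (hA : Measurable A) (hY1 : Measurable Y1) (hY0 : Measurable Y0)
    (hSUTVA : ∀ ω, Y ω = if A ω then Y1 ω else Y0 ω)
    (hUnconf : ∀ B : Set (ℝ × ℝ), MeasurableSet B → ∀ a : Bool,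
      μ[Set.indicator {ω | (Y1 ω, Y0 ω) ∈ B ∧ A ω = a} (fun _ => (1 : ℝ)) |
          MeasurableSpace.comap X inferInstance] =ᵐ[μ]
        fun ω => (μ[Set.indicator {ω | (Y1 ω, Y0 ω) ∈ B} (fun _ => (1 : ℝ)) |
            MeasurableSpace.comap X inferInstance]) ω *
          (μ[Set.indicator {ω | A ω = a} (fun _ => (1 : ℝ)) |
            MeasurableSpace.comap X inferInstance]) ω)
    (π : (Fin d → ℝ) → ℝ) (hπ : Measurable π) (hπ01 : ∀ x, 0 < π x ∧ π x < 1)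
    (hπprop : ∀ S : Set (Fin d → ℝ), MeasurableSet S →
      μ ({ω | A ω = true} ∩ X ⁻¹' S) = ∫⁻ x in S, ENNReal.ofReal (π x) ∂(μ.map X))
    (κ1 : Kernel (Fin d → ℝ) ℝ) [IsMarkovKernel κ1]
    (hκ1 : μ.map (fun ω => (X ω, Y1 ω)) = (μ.map X) ⊗ₘ κ1)
    (c1 c0 : ENNReal)
    (hc1 : c1 = μ {ω | A ω = true}) (hc0 : c0 = μ {ω | A ω = false})
    (hc1pos : 0 < c1) (hc0pos : 0 < c0)
    (PX1 PX0 : Measure (Fin d → ℝ))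
    (hPX1 : PX1 = c1⁻¹ • (μ.restrict {ω | A ω = true}).map X)
    (hPX0 : PX0 = c0⁻¹ • (μ.restrict {ω | A ω = false}).map X) :
    c1⁻¹ • (μ.restrict {ω | A ω = true}).map (fun ω => (X ω, Y ω)) = PX1 ⊗ₘ κ1 ∧
      PX0 = PX1.withDensity fun x => (c1 / c0) * ENNReal.ofReal ((1 - π x) / π x) := by
  have hAt : MeasurableSet {ω | A ω = true} := hA (measurableSet_singleton true)
  have hAf : MeasurableSet {ω | A ω = false} := hA (measurableSet_singleton false)
  haveI : IsProbabilityMeasure (μ.map X) := Measure.isProbabilityMeasure_map hX.aemeasurable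
  have hc1ne : c1 ≠ 0 := hc1pos.ne'
  have hc1top : c1 ≠ ⊤ := by rw [hc1]; exact (measure_lt_top μ _).ne
  have hπpos : ∀ x, (0:ℝ) < π x := fun x => (hπ01 x).1
  -- withDensity representation of PX1
  have hPX1' : PX1 = c1⁻¹ • (μ.map X).withDensity (fun x => ENNReal.ofReal (π x)) := by
    rw [hPX1]; congr 1
    refine Measure.ext fun S hS => ?_
    rw [Measure.map_apply hX hS, Measure.restrict_apply (hX hS), Set.inter_comm,
      hπprop S hS, withDensity_apply _ hS]
  -- withDensity representation of PX0
  have hPX0' : PX0 = c0⁻¹ • (μ.map X).withDensity (fun x => ENNReal.ofReal (1 - π x)) := by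
    rw [hPX0]; congr 1
    refine Measure.ext fun S hS => ?_
    rw [Measure.map_apply hX hS, Measure.restrict_apply (hX hS), withDensity_apply _ hS]
    have hd : X ⁻¹' S ∩ {ω | A ω = false} = X ⁻¹' S \ {ω | A ω = true} := by
      ext ω; simp [Set.mem_diff]
    have hsplit := measure_inter_add_diff (X ⁻¹' S) hAt (μ := μ)
    have hfin : μ (X ⁻¹' S ∩ {ω | A ω = true}) ≠ ⊤ := (measure_lt_top μ _).ne
    have hL : μ (X ⁻¹' S ∩ {ω | A ω = false})
        = μ (X ⁻¹' S) - μ ({ω | A ω = true} ∩ X ⁻¹' S) := by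
      rw [hd, Set.inter_comm]
      exact ENNReal.eq_sub_of_add_eq (measure_lt_top μ _).ne
        (by rw [add_comm, Set.inter_comm]; rw [Set.inter_comm] at hsplit; exact hsplit)
    rw [hL, hπprop S hS]
    have hsub : ∫⁻ x in S, ENNReal.ofReal (1 - π x) ∂(μ.map X)
        = ∫⁻ x in S, (1 - ENNReal.ofReal (π x)) ∂(μ.map X) := by
      refine lintegral_congr fun x => ?_
      rw [ENNReal.ofReal_sub 1 (hπpos x).le, ENNReal.ofReal_one]
    rw [hsub, lintegral_sub (by fun_prop) ?fin (ae_of_all _ fun x => ENNReal.ofReal_le_one.2 (hπ01 x).2.le)]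
    · rw [setLIntegral_one, Measure.map_apply hX hS]
    case fin =>
      refine ne_of_lt (lt_of_le_of_lt (le_trans (lintegral_mono fun x =>
        ENNReal.ofReal_le_one.2 (hπ01 x).2.le) (by rw [setLIntegral_one])) ?_)
      exact measure_lt_top _ _
  -- PART 2
  have hpart2 : PX0 = PX1.withDensity fun x => (c1 / c0) * ENNReal.ofReal ((1 - π x) / π x) := by
    rw [hPX0', hPX1', withDensity_smul_measure,
      ← withDensity_mul _ (by fun_prop) (by fun_prop)]
    have hfun : (fun x => ENNReal.ofReal (π x)) * (fun x => (c1 / c0) * ENNReal.ofReal ((1 - π x) / π x))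
        = (c1 / c0) • fun x => ENNReal.ofReal (1 - π x) := by
      funext x
      simp only [Pi.mul_apply, Pi.smul_apply, smul_eq_mul]
      rw [mul_comm (ENNReal.ofReal (π x)), mul_assoc, ← ENNReal.ofReal_mul
        (div_nonneg (by linarith [(hπ01 x).2]) (hπpos x).le),
        div_mul_cancel₀ _ (hπpos x).ne']
    rw [hfun, withDensity_smul _ (by fun_prop), smul_smul]
    congr 1
    rw [div_eq_mul_inv, ← mul_assoc, ENNReal.inv_mul_cancel hc1ne hc1top, one_mul]
  refine ⟨?_, hpart2⟩
  -- PART 1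
  have hm : MeasurableSpace.comap X inferInstance ≤ ‹MeasurableSpace Ω› := hX.comap_le
  haveI : SigmaFinite (μ.trim hm) := by infer_instance
  have hY : Measurable Y := by
    have hYeq : Y = fun ω => if A ω then Y1 ω else Y0 ω := funext hSUTVA
    rw [hYeq]
    exact Measurable.ite hAt hY1 hY0
  have hcondA := aux_condexp μ X hX π hπ (fun x => (hπ01 x).1.le) (fun x => (hπ01 x).2.le)
    _ hAt hπprop
  have hcondB : ∀ T : Set ℝ, MeasurableSet T →
      (fun ω => (κ1 (X ω) T).toReal) =ᵐ[μ]
        μ[Set.indicator {ω | Y1 ω ∈ T} (fun _ => (1:ℝ)) |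
          MeasurableSpace.comap X inferInstance] := by
    intro T hT
    refine aux_condexp μ X hX (fun x => (κ1 x T).toReal)
      ((κ1.measurable_coe hT).ennreal_toReal) (fun x => ENNReal.toReal_nonneg)
      (fun x => by simpa using ENNReal.toReal_mono ENNReal.one_ne_top prob_le_one)
      _ (hY1 hT) (fun S hS => ?_)
    have hset : {ω | Y1 ω ∈ T} ∩ X ⁻¹' S = (fun ω => (X ω, Y1 ω)) ⁻¹' (S ×ˢ T) := by
      ext ω; simp [Set.mem_prod, and_comm]
    rw [hset, ← Measure.map_apply (hX.prodMk hY1) (hS.prod hT), hκ1,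
      Measure.compProd_apply_prod hS hT]
    exact lintegral_congr fun x => (ENNReal.ofReal_toReal (measure_ne_top _ _)).symm
  have key : ∀ S : Set (Fin d → ℝ), MeasurableSet S → ∀ T : Set ℝ, MeasurableSet T →
      μ ((fun ω => (X ω, Y ω)) ⁻¹' (S ×ˢ T) ∩ {ω | A ω = true})
        = ∫⁻ x in S, ENNReal.ofReal (π x) * κ1 x T ∂(μ.map X) := by
    intro S hS T hT
    have hE : MeasurableSet {ω | Y1 ω ∈ T ∧ A ω = true} := (hY1 hT).inter hAt
    have hsetY : (fun ω => (X ω, Y ω)) ⁻¹' (S ×ˢ T) ∩ {ω | A ω = true}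
        = {ω | Y1 ω ∈ T ∧ A ω = true} ∩ X ⁻¹' S := by
      ext ω
      simp only [Set.mem_inter_iff, Set.mem_preimage, Set.mem_prod, Set.mem_setOf_eq]
      constructor
      · rintro ⟨⟨h1, h2⟩, h3⟩
        rw [hSUTVA ω, if_pos h3] at h2
        exact ⟨⟨h2, h3⟩, h1⟩
      · rintro ⟨⟨h2, h3⟩, h1⟩
        refine ⟨⟨h1, ?_⟩, h3⟩
        rw [hSUTVA ω, if_pos h3]; exact h2
    rw [hsetY]
    have hB := hUnconf (T ×ˢ Set.univ) (hT.prod MeasurableSet.univ) true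
    have e1 : {ω | (Y1 ω, Y0 ω) ∈ T ×ˢ Set.univ ∧ A ω = true}
        = {ω | Y1 ω ∈ T ∧ A ω = true} := by ext ω; simp [Set.mem_prod]
    have e2 : {ω | (Y1 ω, Y0 ω) ∈ T ×ˢ Set.univ} = {ω | Y1 ω ∈ T} := by
      ext ω; simp [Set.mem_prod]
    rw [e1, e2] at hB
    have hae : μ[Set.indicator {ω | Y1 ω ∈ T ∧ A ω = true} (fun _ => (1:ℝ)) |
          MeasurableSpace.comap X inferInstance]
        =ᵐ[μ] fun ω => (κ1 (X ω) T).toReal * π (X ω) := by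
      filter_upwards [hB, hcondA, hcondB T hT] with ω h1 h2 h3
      rw [h1, ← h2, ← h3]
    have hint : Integrable (Set.indicator {ω | Y1 ω ∈ T ∧ A ω = true} (fun _ => (1:ℝ))) μ :=
      (integrable_const 1).indicator hE
    have hmeasg : Measurable fun ω => (κ1 (X ω) T).toReal * π (X ω) :=
      (((κ1.measurable_coe hT).comp hX).ennreal_toReal).mul (hπ.comp hX)
    have hreal : (μ ({ω | Y1 ω ∈ T ∧ A ω = true} ∩ X ⁻¹' S)).toReal
        = ∫ x in S, (κ1 x T).toReal * π x ∂(μ.map X) := by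
      have h1 : (μ ({ω | Y1 ω ∈ T ∧ A ω = true} ∩ X ⁻¹' S)).toReal
          = ∫ ω in X ⁻¹' S,
              Set.indicator {ω | Y1 ω ∈ T ∧ A ω = true} (fun _ => (1:ℝ)) ω ∂μ := by
        rw [setIntegral_indicator hE, setIntegral_const, measureReal_def, smul_eq_mul, mul_one, Set.inter_comm]
      have h2 : ∫ ω in X ⁻¹' S,
            Set.indicator {ω | Y1 ω ∈ T ∧ A ω = true} (fun _ => (1:ℝ)) ω ∂μ
          = ∫ ω in X ⁻¹' S, (κ1 (X ω) T).toReal * π (X ω) ∂μ := by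
        rw [← setIntegral_condExp hm hint ⟨S, hS, rfl⟩]
        exact setIntegral_congr_ae (hX hS) (hae.mono fun ω h _ => h)
      have h3 : ∫ ω in X ⁻¹' S, (κ1 (X ω) T).toReal * π (X ω) ∂μ
          = ∫ x in S, (κ1 x T).toReal * π x ∂(μ.map X) := by
        rw [setIntegral_map (f := fun x => (κ1 x T).toReal * π x) hS (((κ1.measurable_coe hT).ennreal_toReal.mul
          hπ).aestronglyMeasurable) hX.aemeasurable]
      rw [h1, h2, h3]
    have hfin2 : ∫⁻ x in S, ENNReal.ofReal (π x) * κ1 x T ∂(μ.map X) ≠ ⊤ := by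
      refine ne_of_lt (lt_of_le_of_lt (le_trans (lintegral_mono fun x =>
        mul_le_one' (ENNReal.ofReal_le_one.2 (hπ01 x).2.le) prob_le_one)
        (le_of_eq (setLIntegral_one _))) (measure_lt_top _ _))
    have htoReal : (∫⁻ x in S, ENNReal.ofReal (π x) * κ1 x T ∂(μ.map X)).toReal
        = ∫ x in S, (κ1 x T).toReal * π x ∂(μ.map X) := by
      rw [← integral_toReal (f := fun x => ENNReal.ofReal (π x) * κ1 x T) ((hπ.ennreal_ofReal.mul
          (κ1.measurable_coe hT)).aemeasurable.restrict)
        (ae_of_all _ fun x => lt_of_le_of_lt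
          (mul_le_one' (ENNReal.ofReal_le_one.2 (hπ01 x).2.le) prob_le_one) ENNReal.one_lt_top)]
      refine integral_congr_ae (ae_of_all _ fun x => ?_)
      show (ENNReal.ofReal (π x) * κ1 x T).toReal = (κ1 x T).toReal * π x
      rw [ENNReal.toReal_mul, ENNReal.toReal_ofReal (hπpos x).le, mul_comm]
    refine (ENNReal.toReal_eq_toReal_iff' (measure_ne_top μ _) hfin2).1 ?_
    rw [hreal, htoReal]
  haveI : SFinite PX1 := by rw [hPX1']; infer_instance
  have hrect : ∀ S : Set (Fin d → ℝ), MeasurableSet S → ∀ T : Set ℝ, MeasurableSet T →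
      (c1⁻¹ • (μ.restrict {ω | A ω = true}).map (fun ω => (X ω, Y ω))) (S ×ˢ T)
        = (PX1 ⊗ₘ κ1) (S ×ˢ T) := by
    intro S hS T hT
    rw [Measure.smul_apply, Measure.map_apply (hX.prodMk hY) (hS.prod hT),
      Measure.restrict_apply ((hX.prodMk hY) (hS.prod hT)), smul_eq_mul, key S hS T hT,
      Measure.compProd_apply_prod hS hT, hPX1', Measure.restrict_smul,
      lintegral_smul_measure,
      setLIntegral_withDensity_eq_setLIntegral_mul _ hπ.ennreal_ofReal
        (κ1.measurable_coe hT) hS]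
    rfl
  haveI : IsFiniteMeasure
      (c1⁻¹ • (μ.restrict {ω | A ω = true}).map (fun ω => (X ω, Y ω))) := by
    constructor
    rw [Measure.smul_apply, smul_eq_mul]
    exact ENNReal.mul_lt_top (ENNReal.inv_lt_top.2 hc1pos) (measure_lt_top _ _)
  refine ext_of_generate_finite _ generateFrom_prod.symm isPiSystem_prod ?_ ?_
  · rintro s ⟨S, hS, T, hT, rfl⟩
    exact hrect S hS T hT
  · rw [← Set.univ_prod_univ]
    exact hrect _ MeasurableSet.univ _ MeasurableSet.univ
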